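/- Let H be a left Hopf R-algebroid with invertible antipode S, F an invertible counital 2-cocycle with V_F invertible, and S_F(h) = V_F⁻¹(Sh)V_F with inverse S_F⁻¹(h) = (S⁻¹V_F⁻¹)(S⁻¹h)(S⁻¹V_F). Then (S_F⁻¹h_(2F))_(1F) ⊗_{R_F} (S_F⁻¹h_(2F))_(2F)h_(1F) = S_F⁻¹h ⊗_{R_F} 1_H for all h ∈ H. -/

import Mathlib

open TensorProduct

noncomputable section Bialgebroid

variable (k R H : Type*) [CommRing k] [Ring R] [Ring H] [Algebra k R] [Algebra k H]

/-- Data of a left `R`-bialgebroid over `k`, with a chosen `k`-linear lift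
`Δ : H → H ⊗ₖ H` of the comultiplication `H → H ⊗_R H`. -/
structure BgdCore where
  /-- the source map -/
  α : R →ₐ[k] H
  /-- the target map (an algebra antihomomorphism) -/
  β : R →ₗ[k] H
  β_one : β 1 = 1
  β_mul : ∀ r s : R, β (r * s) = β s * β r
  αβ_comm : ∀ r s : R, α r * β s = β s * α r
  /-- lift of the comultiplication -/
  Δ : H →ₗ[k] H ⊗[k] H
  /-- the counit -/
  ε : H →ₗ[k] R

variable {k R H}

namespace BgdCore

/-- kernel of `H ⊗ₖ H ⊗ₖ H → H ⊗ H ⊗ H` over the base, for general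
source/target maps `a`, `b`. -/
def iR3g (a b : R → H) : Submodule k ((H ⊗[k] H) ⊗[k] H) :=
  Submodule.span k
    ({x | ∃ (r : R) (g g' g'' : H),
        x = ((b r * g) ⊗ₜ[k] g') ⊗ₜ[k] g'' - (g ⊗ₜ[k] (a r * g')) ⊗ₜ[k] g''} ∪
     {x | ∃ (r : R) (g g' g'' : H),
        x = (g ⊗ₜ[k] (b r * g')) ⊗ₜ[k] g'' - (g ⊗ₜ[k] g') ⊗ₜ[k] (a r * g'')})

variable (D : BgdCore k R H)

/-- `I_R`, the kernel of the projection `H ⊗ₖ H → H ⊗_R H`. -/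
def iR : Submodule k (H ⊗[k] H) :=
  Submodule.span k
    {x | ∃ (r : R) (g g' : H), x = (D.β r * g) ⊗ₜ[k] g' - g ⊗ₜ[k] (D.α r * g')}

/-- kernel of `H ⊗ₖ H ⊗ₖ H → H ⊗_R H ⊗_R H`. -/
def iR3 : Submodule k ((H ⊗[k] H) ⊗[k] H) :=
  iR3g (fun r => D.α r) (fun r => D.β r)

/-- `x ⊗ y ↦ α(ε x) * y`, realizing the left counit constraint. -/
def counitL : H ⊗[k] H →ₗ[k] H :=
  LinearMap.mul' k H ∘ₗ TensorProduct.map (D.α.toLinearMap ∘ₗ D.ε) LinearMap.id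

/-- `x ⊗ y ↦ β(ε y) * x`, realizing the right counit constraint. -/
def counitR : H ⊗[k] H →ₗ[k] H :=
  LinearMap.mul' k H ∘ₗ TensorProduct.map (D.β ∘ₗ D.ε) LinearMap.id
    ∘ₗ (TensorProduct.comm k H H).toLinearMap

end BgdCore

variable (k R H) in
/-- A left `R`-bialgebroid; identities involving `H ⊗_R H` are stated for the
chosen lifts modulo the ideal `I_R`. -/
structure LeftBialgebroid extends BgdCore k R H where
  εα : ∀ r : R, ε (α r) = r
  εβ : ∀ r : R, ε (β r) = r
  ε_lmul : ∀ (r : R) (h : H), ε (α r * h) = r * ε h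
  ε_rmul : ∀ (r : R) (h : H), ε (β r * h) = ε h * r
  ε_weakmul : ∀ g h : H, ε (g * h) = ε (g * α (ε h))
  counit_left : ∀ h : H, toBgdCore.counitL (Δ h) = h
  counit_right : ∀ h : H, toBgdCore.counitR (Δ h) = h
  Δ_one : Δ 1 - 1 ∈ toBgdCore.iR
  Δ_mul : ∀ g h : H, Δ (g * h) - Δ g * Δ h ∈ toBgdCore.iR
  Δ_bimod : ∀ (a b : R) (h : H),
    Δ (α a * (β b * h)) - (α a ⊗ₜ[k] β b) * Δ h ∈ toBgdCore.iR
  Δ_ideal : ∀ h : H, ∀ x ∈ toBgdCore.iR, Δ h * x ∈ toBgdCore.iR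
  coassoc : ∀ h : H,
    (TensorProduct.map Δ LinearMap.id) (Δ h)
      - (TensorProduct.assoc k H H H).symm ((TensorProduct.map LinearMap.id Δ) (Δ h))
      ∈ toBgdCore.iR3

/-- `x ⊗ y ↦ (Dl(T x) * C) * (y ⊗ 1)`; Sweedler: `(Tx)₍₁₎C¹y ⊗ (Tx)₍₂₎C²`. -/
def sandL (Dl : H →ₗ[k] H ⊗[k] H) (T : H →ₗ[k] H) (C : H ⊗[k] H) :
    H ⊗[k] H →ₗ[k] H ⊗[k] H :=
  LinearMap.mul' k (H ⊗[k] H) ∘ₗ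
    TensorProduct.map (LinearMap.mulRight k C ∘ₗ Dl ∘ₗ T) ((TensorProduct.mk k H H).flip 1)

/-- `x ⊗ y ↦ (Dl(T y) * C) * (1 ⊗ x)`. -/
def sandR (Dl : H →ₗ[k] H ⊗[k] H) (T : H →ₗ[k] H) (C : H ⊗[k] H) :
    H ⊗[k] H →ₗ[k] H ⊗[k] H :=
  LinearMap.mul' k (H ⊗[k] H) ∘ₗ
    TensorProduct.map (LinearMap.mulRight k C ∘ₗ Dl ∘ₗ T) (TensorProduct.mk k H H 1)
    ∘ₗ (TensorProduct.comm k H H).toLinearMap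

/-- `(x ⊗ y) ⊗ z ↦ Dl(T x) * (y ⊗ z)`, lift of the map `δ_S`. -/
def trimapL (Dl : H →ₗ[k] H ⊗[k] H) (T : H →ₗ[k] H) :
    (H ⊗[k] H) ⊗[k] H →ₗ[k] H ⊗[k] H :=
  LinearMap.mul' k (H ⊗[k] H) ∘ₗ TensorProduct.map (Dl ∘ₗ T) LinearMap.id
    ∘ₗ (TensorProduct.assoc k H H H).toLinearMap

/-- `(x ⊗ y) ⊗ z ↦ Dl(T z) * (x ⊗ y)`, lift of the map `δ_{S⁻¹}`. -/
def trimapR (Dl : H →ₗ[k] H ⊗[k] H) (T : H →ₗ[k] H) :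
    (H ⊗[k] H) ⊗[k] H →ₗ[k] H ⊗[k] H :=
  LinearMap.mul' k (H ⊗[k] H) ∘ₗ TensorProduct.map (Dl ∘ₗ T) LinearMap.id
    ∘ₗ (TensorProduct.comm k (H ⊗[k] H) H).toLinearMap

/-- `V`-element: for `F = F¹ ⊗ F²` this is `(T F¹) F²`. -/
def Vof (T : H →ₗ[k] H) (F : H ⊗[k] H) : H :=
  LinearMap.mul' k H ((TensorProduct.map T LinearMap.id) F)

/-- conjugated map `h ↦ a * (T h) * b`. -/
def SFmap (T : H →ₗ[k] H) (a b : H) : H →ₗ[k] H :=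
  LinearMap.mulLeft k a ∘ₗ LinearMap.mulRight k b ∘ₗ T

/-- A Böhm–Szlachányi invertible antipode for a left bialgebroid. -/
structure BSAntipode (B : LeftBialgebroid k R H) where
  /-- the antipode -/
  S : H →ₗ[k] H
  /-- its inverse -/
  Sinv : H →ₗ[k] H
  S_Sinv : ∀ h : H, S (Sinv h) = h
  Sinv_S : ∀ h : H, Sinv (S h) = h
  S_one : S 1 = 1
  S_antimul : ∀ g h : H, S (g * h) = S h * S g
  Sβ : ∀ r : R, S (B.toBgdCore.β r) = B.toBgdCore.α r
  Sinvα : ∀ r : R, Sinv (B.toBgdCore.α r) = B.toBgdCore.β r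
  left_axiom : ∀ h : H,
    sandL B.toBgdCore.Δ S 1 (B.toBgdCore.Δ h) - (1 : H) ⊗ₜ[k] S h ∈ B.toBgdCore.iR
  right_axiom : ∀ h : H,
    sandR B.toBgdCore.Δ Sinv 1 (B.toBgdCore.Δ h) - (Sinv h) ⊗ₜ[k] (1 : H) ∈ B.toBgdCore.iR

/-- A Drinfeld–Xu invertible counital 2-cocycle. -/
structure DXCocycle (B : LeftBialgebroid k R H) where
  /-- a lift of the 2-cocycle -/
  F : H ⊗[k] H
  /-- a lift of its inverse -/
  Fbar : H ⊗[k] H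
  counital_l : B.toBgdCore.counitL F = 1
  counital_r : B.toBgdCore.counitR F = 1
  cocycle :
    (TensorProduct.map B.toBgdCore.Δ LinearMap.id) F * (F ⊗ₜ[k] (1 : H))
      - (TensorProduct.assoc k H H H).symm ((TensorProduct.map LinearMap.id B.toBgdCore.Δ) F)
        * (TensorProduct.assoc k H H H).symm ((1 : H) ⊗ₜ[k] F) ∈ B.toBgdCore.iR3
  inv_right : F * Fbar - 1 ∈ B.toBgdCore.iR
  inv_left : Fbar * F - 1 ∈ Submodule.map (LinearMap.mulLeft k Fbar) B.toBgdCore.iR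

namespace DXCocycle

variable {B : LeftBialgebroid k R H} (C : DXCocycle B)

/-- twisted source `α_F(r) = α(F¹ ▷ r) F²`. -/
def alphaF (r : R) : H :=
  B.toBgdCore.counitL (C.F * (B.toBgdCore.α r ⊗ₜ[k] (1 : H)))

/-- twisted target `β_F(r) = β(F² ▷ r) F¹`. -/
def betaF (r : R) : H :=
  B.toBgdCore.counitR (C.F * ((1 : H) ⊗ₜ[k] B.toBgdCore.α r))

/-- `I_{R_F} = F⁻¹ I_R`, the kernel of `H ⊗ₖ H → H ⊗_{R_F} H`. -/
def iRF : Submodule k (H ⊗[k] H) :=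
  Submodule.map (LinearMap.mulLeft k C.Fbar) B.toBgdCore.iR

/-- lift of the twisted comultiplication `Δ_F(h) = F⁻¹ Δ(h) F`. -/
def ΔF : H →ₗ[k] H ⊗[k] H :=
  LinearMap.mulLeft k C.Fbar ∘ₗ LinearMap.mulRight k C.F ∘ₗ B.toBgdCore.Δ

/-- `α_F` as a linear map. -/
def alphaFlin : R →ₗ[k] H :=
  B.toBgdCore.counitL ∘ₗ LinearMap.mulLeft k C.F
    ∘ₗ (TensorProduct.mk k H H).flip 1 ∘ₗ B.toBgdCore.α.toLinearMap

/-- `β_F` as a linear map. -/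
def betaFlin : R →ₗ[k] H :=
  B.toBgdCore.counitR ∘ₗ LinearMap.mulLeft k C.F
    ∘ₗ TensorProduct.mk k H H 1 ∘ₗ B.toBgdCore.α.toLinearMap

/-- left counit constraint of the twisted bialgebroid. -/
def counitLF : H ⊗[k] H →ₗ[k] H :=
  LinearMap.mul' k H ∘ₗ TensorProduct.map (C.alphaFlin ∘ₗ B.toBgdCore.ε) LinearMap.id

/-- right counit constraint of the twisted bialgebroid. -/
def counitRF : H ⊗[k] H →ₗ[k] H :=
  LinearMap.mul' k H ∘ₗ TensorProduct.map (C.betaFlin ∘ₗ B.toBgdCore.ε) LinearMap.id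
    ∘ₗ (TensorProduct.comm k H H).toLinearMap

end DXCocycle

end Bialgebroid

/-!
Everything is computed modulo `I_R` with the map `Φ(a ⊗ b) = Δ(S⁻¹b)(1 ⊗ a)`, in terms of which
the right Böhm–Szlachányi axiom reads `Φ(Δh) ≡ S⁻¹h ⊗ 1`; as `Δ` is multiplicative and `S⁻¹`
antimultiplicative, this upgrades to `Φ(Δh · X) ≡ Φ(X)(S⁻¹h ⊗ 1)`. Applying the three-leg version
of `Φ` to the cocycle identity gives `Δ(W) F ≡ Φ(F)(W ⊗ 1)` for `W = S⁻¹V_F = (S⁻¹F²)F¹`.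
Since `S_F⁻¹h = W⁻¹(S⁻¹h)W` and `F Δ_F h ≡ Δh · F`, the left-hand side of the twisted axiom is,
up to `F⁻¹ I_R = I_{R_F}`, `F⁻¹` times
`Δ(W⁻¹) Φ(F · Δ_F h)(W ⊗ 1) ≡ Δ(W⁻¹) Φ(Δh · F)(W ⊗ 1) ≡ Δ(W⁻¹) Φ(F)(W ⊗ 1)(S_F⁻¹h ⊗ 1)
  ≡ Δ(W⁻¹) Δ(W) F (S_F⁻¹h ⊗ 1) ≡ F (S_F⁻¹h ⊗ 1)`.
-/

variable {k R H : Type*} [CommRing k] [Ring R] [Ring H] [Algebra k R] [Algebra k H]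

section Lifts

variable (Dl : H →ₗ[k] H ⊗[k] H) (T : H →ₗ[k] H)

@[simp]
theorem sandR_tmul (C : H ⊗[k] H) (a b : H) :
    sandR Dl T C (a ⊗ₜ[k] b) = Dl (T b) * C * ((1 : H) ⊗ₜ[k] a) := by
  simp [sandR]

theorem sandR_mul_tmul_one (C : H ⊗[k] H) (u : H) (X : H ⊗[k] H) :
    sandR Dl T (C * (u ⊗ₜ[k] (1 : H))) X = sandR Dl T C X * (u ⊗ₜ[k] (1 : H)) := by
  induction X using TensorProduct.induction_on with
  | zero => simp
  | tmul a b => simp [mul_assoc]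
  | add x y hx hy => rw [map_add, map_add, hx, hy, add_mul]

@[simp]
theorem trimapR_tmul (X : H ⊗[k] H) (z : H) : trimapR Dl T (X ⊗ₜ[k] z) = Dl (T z) * X := by
  simp [trimapR]

theorem trimapR_mul_tmul_one (Z : (H ⊗[k] H) ⊗[k] H) (c : H ⊗[k] H) :
    trimapR Dl T (Z * (c ⊗ₜ[k] (1 : H))) = trimapR Dl T Z * c := by
  induction Z using TensorProduct.induction_on with
  | zero => simp
  | tmul X z => simp [mul_assoc]
  | add x y hx hy => rw [add_mul, map_add, map_add, hx, hy, add_mul]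

theorem trimapR_assoc_symm_tmul (c : H) (Y : H ⊗[k] H) :
    trimapR Dl T ((TensorProduct.assoc k H H H).symm (c ⊗ₜ[k] Y))
      = sandR Dl T 1 Y * (c ⊗ₜ[k] (1 : H)) := by
  induction Y using TensorProduct.induction_on with
  | zero => simp
  | tmul a b => simp [mul_assoc]
  | add x y hx hy => rw [tmul_add, map_add, map_add, hx, hy, map_add, add_mul]

@[simp]
theorem SFmap_apply (u w x : H) : SFmap T u w x = u * (T x * w) := by
  simp [SFmap]

end Lifts

namespace BgdCore

variable (D : BgdCore k R H)

theorem tmul_sub_tmul_mem_iR (r : R) (g g' : H) :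
    (D.β r * g) ⊗ₜ[k] g' - g ⊗ₜ[k] (D.α r * g') ∈ D.iR :=
  Submodule.subset_span ⟨r, g, g', rfl⟩

theorem mul_mem_iR {z : H ⊗[k] H} (hz : z ∈ D.iR) (c : H ⊗[k] H) : z * c ∈ D.iR := by
  induction hz using Submodule.span_induction generalizing c with
  | mem x hx =>
    obtain ⟨r, g, g', rfl⟩ := hx
    induction c using TensorProduct.induction_on with
    | zero => simp
    | tmul u v =>
      simpa [sub_mul, mul_assoc] using D.tmul_sub_tmul_mem_iR r (g * u) (g' * v)
    | add x y hx hy => rw [mul_add]; exact D.iR.add_mem hx hy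
  | zero => simp
  | add x y _ _ hx hy => rw [add_mul]; exact D.iR.add_mem (hx c) (hy c)
  | smul a x _ hx => rw [smul_mul_assoc]; exact D.iR.smul_mem a (hx c)

theorem smodEq_mul_right {x y : H ⊗[k] H} (hxy : x ≡ y [SMOD D.iR]) (c : H ⊗[k] H) :
    x * c ≡ y * c [SMOD D.iR] :=
  SModEq.sub_mem.mpr (by simpa [sub_mul] using D.mul_mem_iR (SModEq.sub_mem.mp hxy) c)

theorem one_tmul_β_mul_mem_iR (s : R) {z : H ⊗[k] H} (hz : z ∈ D.iR) :
    ((1 : H) ⊗ₜ[k] D.β s) * z ∈ D.iR := by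
  induction hz using Submodule.span_induction with
  | mem x hx =>
    obtain ⟨r, g, g', rfl⟩ := hx
    have hβα : D.β s * (D.α r * g') = D.α r * (D.β s * g') := by
      rw [← mul_assoc, ← D.αβ_comm, mul_assoc]
    simpa [mul_sub, hβα] using D.tmul_sub_tmul_mem_iR r g (D.β s * g')
  | zero => simp
  | add x y _ _ hx hy => rw [mul_add]; exact D.iR.add_mem hx hy
  | smul a x _ hx => rw [mul_smul_comm]; exact D.iR.smul_mem a hx

end BgdCore

namespace LeftBialgebroid

variable (B : LeftBialgebroid k R H)

theorem Δ_mul_smodEq (g h : H) : B.Δ (g * h) ≡ B.Δ g * B.Δ h [SMOD B.iR] :=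
  SModEq.sub_mem.mpr (B.Δ_mul g h)

theorem Δ_one_smodEq : B.Δ 1 ≡ 1 [SMOD B.iR] :=
  SModEq.sub_mem.mpr B.Δ_one

theorem smodEq_Δ_mul_left (g : H) {x y : H ⊗[k] H} (hxy : x ≡ y [SMOD B.iR]) :
    B.Δ g * x ≡ B.Δ g * y [SMOD B.iR] :=
  SModEq.sub_mem.mpr (by rw [← mul_sub]; exact B.Δ_ideal g _ (SModEq.sub_mem.mp hxy))

theorem Δ_mul_Δ_smodEq_one {a b : H} (hab : a * b = 1) : B.Δ a * B.Δ b ≡ 1 [SMOD B.iR] :=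
  (B.Δ_mul_smodEq a b).symm.trans (hab ▸ B.Δ_one_smodEq)

theorem Δ_β_smodEq (r : R) : B.Δ (B.β r) ≡ (1 : H) ⊗ₜ[k] B.β r [SMOD B.iR] := by
  have hbimod : B.Δ (B.β r) ≡ ((1 : H) ⊗ₜ[k] B.β r) * B.Δ 1 [SMOD B.iR] := by
    simpa using SModEq.sub_mem.mpr (B.Δ_bimod 1 r 1)
  refine hbimod.trans (SModEq.sub_mem.mpr ?_)
  simpa [mul_sub] using B.one_tmul_β_mul_mem_iR r B.Δ_one

theorem Δ_mul_β_smodEq (x : H) (r : R) :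
    B.Δ (x * B.β r) ≡ B.Δ x * ((1 : H) ⊗ₜ[k] B.β r) [SMOD B.iR] :=
  (B.Δ_mul_smodEq x _).trans (B.smodEq_Δ_mul_left x (B.Δ_β_smodEq r))

theorem sandR_congr_smodEq (T : H →ₗ[k] H) {C C' : H ⊗[k] H} (hC : C ≡ C' [SMOD B.iR])
    (E : H ⊗[k] H) : sandR B.Δ T C E ≡ sandR B.Δ T C' E [SMOD B.iR] := by
  induction E using TensorProduct.induction_on with
  | zero => simp
  | tmul a b => simpa using B.smodEq_mul_right (B.smodEq_Δ_mul_left (T b) hC) _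
  | add x y hx hy => simpa only [map_add] using hx.add hy

theorem sandR_SFmap_smodEq (T : H →ₗ[k] H) (u w : H) (C E : H ⊗[k] H) :
    sandR B.Δ (SFmap T u w) C E ≡ B.Δ u * sandR B.Δ T (B.Δ w * C) E [SMOD B.iR] := by
  induction E using TensorProduct.induction_on with
  | zero => simp
  | tmul a b =>
    have hΔ : B.Δ (u * (T b * w)) ≡ B.Δ u * (B.Δ (T b) * B.Δ w) [SMOD B.iR] :=
      (B.Δ_mul_smodEq _ _).trans (B.smodEq_Δ_mul_left u (B.Δ_mul_smodEq _ _))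
    simpa [mul_assoc] using B.smodEq_mul_right hΔ (C * ((1 : H) ⊗ₜ[k] a))
  | add x y hx hy => simpa only [map_add, mul_add] using hx.add hy

end LeftBialgebroid

namespace BSAntipode

variable {B : LeftBialgebroid k R H} (A : BSAntipode B)

theorem Sinv_one : A.Sinv 1 = 1 := by
  simpa [A.S_one] using A.Sinv_S 1

theorem Sinv_mul (a b : H) : A.Sinv (a * b) = A.Sinv b * A.Sinv a := by
  conv_lhs => rw [← A.S_Sinv a, ← A.S_Sinv b, ← A.S_antimul]
  exact A.Sinv_S _

theorem Sinv_Vof_tmul (c d : H) : A.Sinv (Vof A.S (c ⊗ₜ[k] d)) = A.Sinv d * c := by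
  simp [Vof, Sinv_mul, A.Sinv_S]

theorem right_axiom_smodEq (h : H) :
    sandR B.Δ A.Sinv 1 (B.Δ h) ≡ A.Sinv h ⊗ₜ[k] (1 : H) [SMOD B.iR] :=
  SModEq.sub_mem.mpr (A.right_axiom h)

theorem sandR_mul_smodEq (C X Y : H ⊗[k] H) :
    sandR B.Δ A.Sinv C (X * Y) ≡ sandR B.Δ A.Sinv (sandR B.Δ A.Sinv C X) Y [SMOD B.iR] := by
  induction Y using TensorProduct.induction_on with
  | zero => simp
  | tmul a b =>
    induction X using TensorProduct.induction_on with
    | zero => simp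
    | tmul c d =>
      have hΔ := B.smodEq_mul_right (B.Δ_mul_smodEq (A.Sinv b) (A.Sinv d))
        (C * ((1 : H) ⊗ₜ[k] (c * a)))
      simpa [Sinv_mul, mul_assoc] using hΔ
    | add x y hx hy => simpa [add_mul, mul_add] using hx.add hy
  | add x y hx hy => simpa only [mul_add, map_add] using hx.add hy

theorem sandR_one_mem_iR {z : H ⊗[k] H} (hz : z ∈ B.iR) : sandR B.Δ A.Sinv 1 z ∈ B.iR := by
  induction hz using Submodule.span_induction with
  | mem x hx =>
    obtain ⟨r, g, g', rfl⟩ := hx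
    have hβ := B.smodEq_mul_right (B.Δ_mul_β_smodEq (A.Sinv g') r) ((1 : H) ⊗ₜ[k] g)
    rw [map_sub, ← SModEq.sub_mem]
    simpa [Sinv_mul, A.Sinvα, mul_assoc] using hβ.symm
  | zero => simp
  | add x y _ _ hx hy => rw [map_add]; exact B.iR.add_mem hx hy
  | smul a x _ hx => rw [map_smul]; exact B.iR.smul_mem a hx

theorem sandR_one_smodEq {X Y : H ⊗[k] H} (hXY : X ≡ Y [SMOD B.iR]) :
    sandR B.Δ A.Sinv 1 X ≡ sandR B.Δ A.Sinv 1 Y [SMOD B.iR] :=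
  SModEq.sub_mem.mpr (map_sub (sandR B.Δ A.Sinv 1) X Y ▸ A.sandR_one_mem_iR (SModEq.sub_mem.mp hXY))

theorem sandR_one_Δ_mul_smodEq (h : H) (X : H ⊗[k] H) :
    sandR B.Δ A.Sinv 1 (B.Δ h * X)
      ≡ sandR B.Δ A.Sinv 1 X * (A.Sinv h ⊗ₜ[k] (1 : H)) [SMOD B.iR] :=
  calc sandR B.Δ A.Sinv 1 (B.Δ h * X)
      ≡ sandR B.Δ A.Sinv (sandR B.Δ A.Sinv 1 (B.Δ h)) X [SMOD B.iR] :=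
        A.sandR_mul_smodEq 1 _ X
    _ ≡ sandR B.Δ A.Sinv (A.Sinv h ⊗ₜ[k] (1 : H)) X [SMOD B.iR] :=
        B.sandR_congr_smodEq _ (A.right_axiom_smodEq h) X
    _ = sandR B.Δ A.Sinv 1 X * (A.Sinv h ⊗ₜ[k] (1 : H)) := by
        rw [← sandR_mul_tmul_one, one_mul]

theorem trimapR_mem_iR {z : (H ⊗[k] H) ⊗[k] H} (hz : z ∈ B.iR3) :
    trimapR B.Δ A.Sinv z ∈ B.iR := by
  induction hz using Submodule.span_induction with
  | mem x hx =>
    rcases hx with hx | hx <;> obtain ⟨r, g, g', g'', rfl⟩ := hx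
    · rw [map_sub, trimapR_tmul, trimapR_tmul, ← mul_sub]
      exact B.Δ_ideal _ _ (B.tmul_sub_tmul_mem_iR r g g')
    · have hβ := B.smodEq_mul_right (B.Δ_mul_β_smodEq (A.Sinv g'') r) (g ⊗ₜ[k] g')
      rw [map_sub, ← SModEq.sub_mem]
      simpa [Sinv_mul, A.Sinvα, mul_assoc] using hβ.symm
  | zero => simp
  | add x y _ _ hx hy => rw [map_add]; exact B.iR.add_mem hx hy
  | smul a x _ hx => rw [map_smul]; exact B.iR.smul_mem a hx

theorem trimapR_map_Δ_id_smodEq (X : H ⊗[k] H) :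
    trimapR B.Δ A.Sinv (TensorProduct.map B.Δ LinearMap.id X)
      ≡ B.Δ (A.Sinv (Vof A.S X)) [SMOD B.iR] := by
  induction X using TensorProduct.induction_on with
  | zero => simp [Vof]
  | tmul c d => simpa [A.Sinv_Vof_tmul] using (B.Δ_mul_smodEq (A.Sinv d) c).symm
  | add x y hx hy => simpa only [map_add, Vof] using hx.add hy

theorem trimapR_assoc_symm_map_id_Δ_smodEq (X Y : H ⊗[k] H) :
    trimapR B.Δ A.Sinv ((TensorProduct.assoc k H H H).symm (TensorProduct.map LinearMap.id B.Δ X)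
        * (TensorProduct.assoc k H H H).symm ((1 : H) ⊗ₜ[k] Y))
      ≡ sandR B.Δ A.Sinv 1 Y * (A.Sinv (Vof A.S X) ⊗ₜ[k] (1 : H)) [SMOD B.iR] := by
  have hmul : ∀ x y : H ⊗[k] (H ⊗[k] H), (TensorProduct.assoc k H H H).symm (x * y)
      = (TensorProduct.assoc k H H H).symm x * (TensorProduct.assoc k H H H).symm y :=
    map_mul (Algebra.TensorProduct.assoc k k k H H H).symm
  rw [← hmul]
  induction X using TensorProduct.induction_on with
  | zero => simp [Vof]
  | tmul c d =>
    have h := B.smodEq_mul_right (A.sandR_one_Δ_mul_smodEq d Y) (c ⊗ₜ[k] (1 : H))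
    simpa [trimapR_assoc_symm_tmul, A.Sinv_Vof_tmul, mul_assoc] using h
  | add x y hx hy => simpa only [map_add, add_mul, Vof, add_tmul, mul_add] using hx.add hy

end BSAntipode

namespace DXCocycle

variable {B : LeftBialgebroid k R H} (C : DXCocycle B)

theorem sandR_ΔF (T : H →ₗ[k] H) (E : H ⊗[k] H) :
    sandR C.ΔF T 1 E = C.Fbar * sandR B.Δ T C.F E := by
  induction E using TensorProduct.induction_on with
  | zero => simp
  | tmul a b => simp [ΔF, mul_assoc]
  | add x y hx hy => rw [map_add, map_add, hx, hy, mul_add]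

theorem F_mul_ΔF_smodEq (h : H) : C.F * C.ΔF h ≡ B.Δ h * C.F [SMOD B.iR] := by
  have hFFbar := B.smodEq_mul_right (SModEq.sub_mem.mpr C.inv_right) (B.Δ h * C.F)
  simpa [ΔF, mul_assoc] using hFFbar

theorem Fbar_mul_sub_mem_iRF {x y : H ⊗[k] H} (hxy : x ≡ C.F * y [SMOD B.iR]) :
    C.Fbar * x - y ∈ C.iRF := by
  obtain ⟨z, hz, hFbarF⟩ := Submodule.mem_map.mp C.inv_left
  have hsplit : C.Fbar * x - y = C.Fbar * (x - C.F * y + z * y) := by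
    rw [LinearMap.mulLeft_apply] at hFbarF
    rw [mul_add, ← mul_assoc C.Fbar z, hFbarF, mul_sub, sub_mul, one_mul, ← mul_assoc]
    abel
  rw [hsplit]
  exact Submodule.mem_map_of_mem (B.iR.add_mem (SModEq.sub_mem.mp hxy) (B.mul_mem_iR hz y))

theorem Δ_Sinv_Vof_mul_F_smodEq (A : BSAntipode B) :
    B.Δ (A.Sinv (Vof A.S C.F)) * C.F
      ≡ sandR B.Δ A.Sinv 1 C.F * (A.Sinv (Vof A.S C.F) ⊗ₜ[k] (1 : H)) [SMOD B.iR] := by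
  have hcocycle := A.trimapR_mem_iR C.cocycle
  rw [map_sub, ← SModEq.sub_mem, trimapR_mul_tmul_one] at hcocycle
  exact (B.smodEq_mul_right (A.trimapR_map_Δ_id_smodEq C.F).symm C.F).trans
    (hcocycle.trans (A.trimapR_assoc_symm_map_id_Δ_smodEq C.F C.F))

end DXCocycle

/-- `S_F⁻¹` satisfies the right antipode axiom for the twisted bialgebroid:
`(S_F⁻¹h₍₂F₎)₍₁F₎ ⊗_{R_F} (S_F⁻¹h₍₂F₎)₍₂F₎h₍₁F₎ = S_F⁻¹h ⊗_{R_F} 1`. -/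
theorem SFinv_right_antipode_axiom (B : LeftBialgebroid k R H) (A : BSAntipode B)
    (C : DXCocycle B) (Vinv : H)
    (hV1 : Vof A.S C.F * Vinv = 1) (hV2 : Vinv * Vof A.S C.F = 1) (h : H) :
    sandR C.ΔF (SFmap A.Sinv (A.Sinv Vinv) (A.Sinv (Vof A.S C.F))) 1 (C.ΔF h)
      - (SFmap A.Sinv (A.Sinv Vinv) (A.Sinv (Vof A.S C.F)) h) ⊗ₜ[k] (1 : H) ∈ C.iRF := by
  set W := A.Sinv (Vof A.S C.F)
  set Wbar := A.Sinv Vinv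
  set Φ := sandR B.Δ A.Sinv 1
  have hWWbar : W * Wbar = 1 := by rw [← A.Sinv_mul, hV2, A.Sinv_one]
  have hWbarW : Wbar * W = 1 := by rw [← A.Sinv_mul, hV1, A.Sinv_one]
  have hKI : B.Δ W * C.F ≡ Φ C.F * (W ⊗ₜ[k] (1 : H)) [SMOD B.iR] :=
    C.Δ_Sinv_Vof_mul_F_smodEq A
  rw [C.sandR_ΔF]
  refine C.Fbar_mul_sub_mem_iRF ?_
  calc sandR B.Δ (SFmap A.Sinv Wbar W) C.F (C.ΔF h)
      ≡ B.Δ Wbar * sandR B.Δ A.Sinv (B.Δ W * C.F) (C.ΔF h) [SMOD B.iR] :=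
        B.sandR_SFmap_smodEq _ _ _ _ _
    _ ≡ B.Δ Wbar * (sandR B.Δ A.Sinv (Φ C.F) (C.ΔF h) * (W ⊗ₜ[k] (1 : H))) [SMOD B.iR] := by
        rw [← sandR_mul_tmul_one]
        exact B.smodEq_Δ_mul_left _ (B.sandR_congr_smodEq _ hKI _)
    _ ≡ B.Δ Wbar * (Φ (C.F * C.ΔF h) * (W ⊗ₜ[k] (1 : H))) [SMOD B.iR] :=
        B.smodEq_Δ_mul_left _ (B.smodEq_mul_right (A.sandR_mul_smodEq 1 _ _).symm _)
    _ ≡ B.Δ Wbar * (Φ (B.Δ h * C.F) * (W ⊗ₜ[k] (1 : H))) [SMOD B.iR] :=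
        B.smodEq_Δ_mul_left _ (B.smodEq_mul_right (A.sandR_one_smodEq (C.F_mul_ΔF_smodEq h)) _)
    _ ≡ B.Δ Wbar * (Φ C.F * (A.Sinv h ⊗ₜ[k] (1 : H)) * (W ⊗ₜ[k] (1 : H))) [SMOD B.iR] :=
        B.smodEq_Δ_mul_left _ (B.smodEq_mul_right (A.sandR_one_Δ_mul_smodEq h C.F) _)
    _ = B.Δ Wbar * (Φ C.F * (W ⊗ₜ[k] (1 : H)))
          * (SFmap A.Sinv Wbar W h ⊗ₜ[k] (1 : H)) := by
        simp only [SFmap_apply, mul_assoc, Algebra.TensorProduct.tmul_mul_tmul, mul_one]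
        rw [← mul_assoc W, hWWbar, one_mul]
    _ ≡ B.Δ Wbar * (B.Δ W * C.F) * (SFmap A.Sinv Wbar W h ⊗ₜ[k] (1 : H)) [SMOD B.iR] :=
        B.smodEq_mul_right (B.smodEq_Δ_mul_left _ hKI.symm) _
    _ ≡ C.F * (SFmap A.Sinv Wbar W h ⊗ₜ[k] (1 : H)) [SMOD B.iR] := by
        simpa [← mul_assoc] using
          B.smodEq_mul_right (B.smodEq_mul_right (B.Δ_mul_Δ_smodEq_one hWbarW) C.F) _
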